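/- arXiv:1806.06270 — 3 statements merged into one kernel-verified Lean document; each statement's English description precedes it below -/
import Mathlib

section
/- If a distribution P' on ({0,1}^p) × {0,1} is obtained from P by reweighting the covariate marginal to be uniform while keeping the conditional law of Y given X unchanged (p'(x, y) = P(Y = y | X = x) · 2^{-p}), and if Y is conditionally independent of V given S under P, then Y and V are independent under P'. -/
/-- Reweighting the covariate marginal to uniform while keeping the
conditional law of `Y` given `X = (S,V)` unchanged: if `Y ⟂ V | S` under `P`, then
`Y` and `V` are independent under the reweighted distribution `P'`. -/
theorem stmt5 (ps pv : ℕ)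
    (P : (Fin ps → Bool) → (Fin pv → Bool) → Bool → ℝ)
    (hnn : ∀ s v y, 0 ≤ P s v y)
    (hsum : ∑ s, ∑ v, ∑ y, P s v y = 1)
    (hmarg : ∀ s v, 0 < ∑ y, P s v y)
    (c : Bool → (Fin ps → Bool) → ℝ)
    (hcond : ∀ s v y, P s v y = (∑ y', P s v y') * c y s)
    (P' : (Fin ps → Bool) → (Fin pv → Bool) → Bool → ℝ)
    (hP' : ∀ s v y, P' s v y = (P s v y / ∑ y', P s v y') * (1 / 2 ^ (ps + pv))) :
    ∀ v y, (∑ s, P' s v y) =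
      (∑ s, ∑ v', P' s v' y) * (∑ s, ∑ y', P' s v y') := by
  intro v y
  set k : ℝ := 1 / 2 ^ (ps + pv) with hk
  -- P' s v y = c y s * k
  have hP'c : ∀ s v y, P' s v y = c y s * k := by
    intro s v y
    have hne : (∑ y', P s v y') ≠ 0 := (hmarg s v).ne'
    rw [hP', hcond, mul_div_cancel_left₀ _ hne]
  -- ∑ y, c y s = 1
  have hc1 : ∀ s, ∑ y', c y' s = 1 := by
    intro s
    have hne : (∑ y', P s v y') ≠ 0 := (hmarg s v).ne'
    have h : ∑ y', P s v y' = (∑ y', P s v y') * ∑ y', c y' s := by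
      rw [Finset.mul_sum]
      exact Finset.sum_congr rfl fun y' _ => hcond s v y'
    have h2 : (∑ y', P s v y') * 1 = (∑ y', P s v y') * ∑ y', c y' s := by
      rw [mul_one]; linarith
    exact (mul_left_cancel₀ hne h2).symm
  have hcardv : (Fintype.card (Fin pv → Bool) : ℝ) = 2 ^ pv := by
    simp [Fintype.card_fun]
  have hcards : (Fintype.card (Fin ps → Bool) : ℝ) = 2 ^ ps := by
    simp [Fintype.card_fun]
  have h1 : (∑ s, P' s v y) = (∑ s, c y s) * k := by
    simp [hP'c, Finset.sum_mul]
  have h2 : (∑ s, ∑ v', P' s v' y) = (2 : ℝ) ^ pv * ((∑ s, c y s) * k) := by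
    simp only [hP'c, Finset.sum_const, nsmul_eq_mul, Finset.card_univ]
    rw [← Finset.mul_sum, hcardv, ← Finset.sum_mul]
  have h3 : (∑ s, ∑ y', P' s v y') = (2 : ℝ) ^ ps * k := by
    simp only [hP'c, ← Finset.sum_mul]
    rw [Finset.sum_congr rfl fun s _ => by rw [hc1 s]]
    simp [hcards]
  rw [h1, h2, h3]
  have hk2 : (2 : ℝ) ^ pv * (2 : ℝ) ^ ps * k = 1 := by
    rw [hk]
    field_simp
    ring
  linear_combination (-(∑ s, c y s) * k) * hk2
end

section
/- Let m_1, m_2 ∈ ℝ with 0 ≤ m_1, 0 ≤ m_2, m_1 + m_2 = m ≤ 2^{p−2}, m_1 ≥ m_2, and p ≥ 2. Then 2^{p−2}/(2^{p−1} − m_1) − (2^{p−2} − m_2)/(2^{p−1} − m_2) ≤ 2^{p−2}/(2^{p−1} − m) − 1/2. -/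
/-- Key inequality from the proof of Lemma 3: for reals
`0 ≤ m₂ ≤ m₁`, `m₁ + m₂ = m ≤ 2^(p-2)`, `p ≥ 2`,
`2^(p-2)/(2^(p-1) − m₁) − (2^(p-2) − m₂)/(2^(p-1) − m₂) ≤ 2^(p-2)/(2^(p-1) − m) − 1/2`. -/
theorem stmt12 (p : ℕ) (hp : 2 ≤ p) (m₁ m₂ m : ℝ)
    (h1 : 0 ≤ m₁) (h2 : 0 ≤ m₂) (hsum : m₁ + m₂ = m)
    (hm : m ≤ (2 : ℝ) ^ (p - 2)) (hge : m₂ ≤ m₁) :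
    (2 : ℝ) ^ (p - 2) / ((2 : ℝ) ^ (p - 1) - m₁) -
        ((2 : ℝ) ^ (p - 2) - m₂) / ((2 : ℝ) ^ (p - 1) - m₂)
      ≤ (2 : ℝ) ^ (p - 2) / ((2 : ℝ) ^ (p - 1) - m) - 1 / 2 := by
  subst hsum
  set Q : ℝ := (2 : ℝ) ^ (p - 2) with hQ
  have hQpos : 0 < Q := by positivity
  have hp1 : p - 1 = (p - 2) + 1 := by omega
  have h2Q : (2 : ℝ) ^ (p - 1) = 2 * Q := by
    rw [hp1, pow_succ, hQ]; ring
  rw [h2Q]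
  have hCm : 0 < 2 * Q - (m₁+m₂) := by linarith
  have hA : 0 < 2 * Q - m₁ := by nlinarith
  have hB : 0 < 2 * Q - m₂ := by nlinarith
  rw [div_sub_div _ _ hA.ne' hB.ne',
    div_sub_div _ _ hCm.ne' (two_ne_zero),
    div_le_div_iff₀ (by positivity) (by positivity)]
  nlinarith [mul_nonneg (mul_nonneg h1 h2) (by linarith : (0:ℝ) ≤ 4*Q - (m₁+m₂))]
end

section
/- If every cell of {0,1}^p appears in the sample (m = 0) and weights W_i = 1/p̂(X_i) are used, then for every pair j ≠ k the weighted balancing discrepancy (∑_{i: X_{i,k}=1, X_{i,j}=1} W_i)/(∑_{i: X_{i,j}=1} W_i) − (∑_{i: X_{i,k}=1, X_{i,j}=0} W_i)/(∑_{i: X_{i,j}=0} W_i) equals exactly 0; both ratios equal 1/2. -/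
open Finset

/-- Sum of inverse-frequency weights over a fiber-defined set equals `n` times the
number of cells satisfying the predicate. -/
lemma stmt16_sumW {n p : ℕ} (hn : 0 < n) (X : Fin n → (Fin p → Bool))
    (phat : (Fin p → Bool) → ℝ)
    (hphat : ∀ x, phat x = ((Finset.univ.filter (fun i => X i = x)).card : ℝ) / n)
    (hpos : ∀ x, 0 < phat x)
    (W : Fin n → ℝ) (hW : ∀ i, W i = 1 / phat (X i))
    (P : (Fin p → Bool) → Prop) [DecidablePred P] :
    ∑ i ∈ Finset.univ.filter (fun i => P (X i)), W i
      = n * (Finset.univ.filter P).card := by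
  classical
  have hc : ∀ x, 0 < (Finset.univ.filter (fun i => X i = x)).card := by
    intro x
    by_contra h
    have h0 : (Finset.univ.filter (fun i => X i = x)).card = 0 := by omega
    have := hpos x
    rw [hphat x, h0] at this
    simp at this
  have hfib : ∀ x, ∑ i ∈ Finset.univ.filter (fun i => X i = x), W i = n := by
    intro x
    have hcx := hc x
    have h1 : ∀ i ∈ Finset.univ.filter (fun i => X i = x),
        W i = (n : ℝ) / (Finset.univ.filter (fun i => X i = x)).card := by
      intro i hi
      simp only [mem_filter] at hi
      rw [hW, hphat, hi.2]
      rw [one_div_div]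
    rw [Finset.sum_congr rfl h1, Finset.sum_const, nsmul_eq_mul]
    have hne : ((Finset.univ.filter (fun i => X i = x)).card : ℝ) ≠ 0 := by
      exact_mod_cast hcx.ne'
    field_simp
  have hmaps : ∀ i ∈ Finset.univ.filter (fun i => P (X i)), X i ∈ Finset.univ.filter P := by
    intro i hi
    simp only [mem_filter] at hi ⊢
    exact ⟨mem_univ _, hi.2⟩
  rw [← Finset.sum_fiberwise_of_maps_to hmaps]
  have hinner : ∀ x ∈ Finset.univ.filter P,
      ∑ i ∈ (Finset.univ.filter (fun i => P (X i))).filter (fun i => X i = x), W i = n := by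
    intro x hx
    simp only [mem_filter] at hx
    rw [Finset.filter_filter]
    have : Finset.univ.filter (fun i => P (X i) ∧ X i = x)
        = Finset.univ.filter (fun i => X i = x) := by
      apply Finset.filter_congr
      intro i _
      constructor
      · exact fun h => h.2
      · intro h; exact ⟨h ▸ hx.2, h⟩
    rw [this, hfib]
  rw [Finset.sum_congr rfl hinner, Finset.sum_const, nsmul_eq_mul, mul_comm]

/-- Halving of the hypercube slice by an independent coordinate. -/
lemma stmt16_card {p : ℕ} (j k : Fin p) (hjk : j ≠ k) (b : Bool) :
    (Finset.univ.filter (fun x : Fin p → Bool => x j = b)).card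
      = 2 * (Finset.univ.filter (fun x : Fin p → Bool => x k = true ∧ x j = b)).card := by
  classical
  have hsplit : Finset.univ.filter (fun x : Fin p → Bool => x j = b)
      = (Finset.univ.filter (fun x : Fin p → Bool => x k = true ∧ x j = b))
        ∪ (Finset.univ.filter (fun x : Fin p → Bool => x k = false ∧ x j = b)) := by
    ext x
    simp only [mem_filter, mem_union, mem_univ, true_and]
    cases hx : x k <;> simp [hx]
  have hdisj : Disjoint (Finset.univ.filter (fun x : Fin p → Bool => x k = true ∧ x j = b))
      (Finset.univ.filter (fun x : Fin p → Bool => x k = false ∧ x j = b)) := by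
    rw [Finset.disjoint_filter]
    intro x _ h1 h2
    rw [h1.1] at h2
    exact absurd h2.1 (by simp)
  have hbij : (Finset.univ.filter (fun x : Fin p → Bool => x k = false ∧ x j = b)).card
      = (Finset.univ.filter (fun x : Fin p → Bool => x k = true ∧ x j = b)).card := by
    apply Finset.card_bij' (fun x _ => Function.update x k true)
      (fun x _ => Function.update x k false)
    · intro x hx
      simp only [mem_filter, mem_univ, true_and] at hx
      funext i
      by_cases hi : i = k
      · subst hi; simp [Function.update_self, hx.1]
      · simp [Function.update_of_ne hi]
    · intro x hx
      simp only [mem_filter, mem_univ, true_and] at hx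
      funext i
      by_cases hi : i = k
      · subst hi; simp [Function.update_self, hx.1]
      · simp [Function.update_of_ne hi]
    · intro x hx
      simp only [mem_filter, mem_univ, true_and] at hx ⊢
      refine ⟨Function.update_self _ _ _, ?_⟩
      rw [Function.update_of_ne hjk]
      exact hx.2
    · intro x hx
      simp only [mem_filter, mem_univ, true_and] at hx ⊢
      refine ⟨Function.update_self _ _ _, ?_⟩
      rw [Function.update_of_ne hjk]
      exact hx.2
  rw [hsplit, Finset.card_union_of_disjoint hdisj, hbij, two_mul]

/-- The numerator slice is nonempty. -/
lemma stmt16_card_pos {p : ℕ} (j k : Fin p) (hjk : j ≠ k) (b : Bool) :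
    0 < (Finset.univ.filter (fun x : Fin p → Bool => x k = true ∧ x j = b)).card := by
  classical
  rw [Finset.card_pos]
  refine ⟨Function.update (fun _ => true) j b, ?_⟩
  simp only [mem_filter, mem_univ, true_and]
  refine ⟨?_, Function.update_self _ _ _⟩
  rw [Function.update_of_ne hjk.symm]

/-- If every cell of `{0,1}^p` appears in the sample and weights
`W i = 1 / p̂(X i)` are used, then for every `j ≠ k` the weighted balancing
discrepancy is exactly `0`, both conditional weighted frequencies being `1/2`. -/
theorem stmt16 (n p : ℕ) (hp : 2 ≤ p) (hn : 0 < n)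
    (X : Fin n → (Fin p → Bool))
    (phat : (Fin p → Bool) → ℝ)
    (hphat : ∀ x, phat x = ((Finset.univ.filter (fun i => X i = x)).card : ℝ) / n)
    (hpos : ∀ x, 0 < phat x)
    (W : Fin n → ℝ) (hW : ∀ i, W i = 1 / phat (X i))
    (j k : Fin p) (hjk : j ≠ k) :
    (∑ i ∈ Finset.univ.filter (fun i => X i k = true ∧ X i j = true), W i) /
        (∑ i ∈ Finset.univ.filter (fun i => X i j = true), W i) = 1 / 2 ∧
    (∑ i ∈ Finset.univ.filter (fun i => X i k = true ∧ X i j = false), W i) /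
        (∑ i ∈ Finset.univ.filter (fun i => X i j = false), W i) = 1 / 2 ∧
    (∑ i ∈ Finset.univ.filter (fun i => X i k = true ∧ X i j = true), W i) /
        (∑ i ∈ Finset.univ.filter (fun i => X i j = true), W i) -
      (∑ i ∈ Finset.univ.filter (fun i => X i k = true ∧ X i j = false), W i) /
        (∑ i ∈ Finset.univ.filter (fun i => X i j = false), W i) = 0 := by
  classical
  have key : ∀ b : Bool,
      (∑ i ∈ Finset.univ.filter (fun i => X i k = true ∧ X i j = b), W i) /
        (∑ i ∈ Finset.univ.filter (fun i => X i j = b), W i) = 1 / 2 := by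
    intro b
    have h1 := stmt16_sumW hn X phat hphat hpos W hW (fun x => x k = true ∧ x j = b)
    have h2 := stmt16_sumW hn X phat hphat hpos W hW (fun x => x j = b)
    rw [h1, h2, stmt16_card j k hjk b]
    have hA : (0:ℝ) < (Finset.univ.filter (fun x : Fin p → Bool => x k = true ∧ x j = b)).card := by
      exact_mod_cast stmt16_card_pos j k hjk b
    have hn' : (0:ℝ) < n := by exact_mod_cast hn
    push_cast
    field_simp
  refine ⟨key true, key false, ?_⟩
  rw [key true, key false, sub_self]
end
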